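/- arXiv:2105.02424 — 3 statements merged into one kernel-verified Lean document; each statement's English description precedes it below -/
import Mathlib

section
/- Let Σ ⊆ ℝ^N be an open convex cone with vertex at 0, Ω ⊂ ℝ^N a bounded smooth domain, Γ₀ := Σ ∩ ∂Ω. Let u : Σ∩Ω → ℝ be nonnegative, Lipschitz on Σ∩Ω, continuously differentiable in Σ∩Ω, with u = 0 on Γ₀. Let w : closure(Σ) → ℝ be continuous on closure(Σ), positive and locally Lipschitz in Σ, and let f : [0,∞) → ℝ be nonnegative, measurable and bounded on compact sets. Set M := sup_{Σ∩Ω} u and, for t ∈ (0,M), I(t) := ∫_{{u>t}} f(u(x)) w(x) dx and μ(t) := ∫_{{u>t}} w(x) dx, where {u>t} := {x ∈ Σ∩Ω : u(x) > t}. Then I and μ are nonincreasing on (0,M) (hence differentiable almost everywhere), I'(t) = f(t) μ'(t) for almost every t ∈ (0,M), and consequently, for any real numbers α, β, the function K := I^α μ^β satisfies −K'(t) = (α I(t)^{α−1} μ(t)^{β} f(t) + β I(t)^{α} μ(t)^{β−1}) · (−μ'(t)) for almost every t ∈ (0,M) at which I(t) > 0. -/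
open MeasureTheory Set Metric
open scoped ENNReal NNReal RealInnerProductSpace Topology Classical

noncomputable section

/-- Divergence of a vector field on `ℝ^N`, computed coordinatewise. -/
def vdiv {N : ℕ} (σ : EuclideanSpace ℝ (Fin N) → EuclideanSpace ℝ (Fin N))
    (x : EuclideanSpace ℝ (Fin N)) : ℝ :=
  ∑ i, fderiv ℝ σ x (EuclideanSpace.single i 1) i

/-- The dual norm `H₀(x) = sup_{ξ ≠ 0} ⟨x, ξ⟩ / H(ξ)`. -/
def dualNorm {N : ℕ} (H : EuclideanSpace ℝ (Fin N) → ℝ) (x : EuclideanSpace ℝ (Fin N)) : ℝ :=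
  sSup ((fun ξ => ⟪x, ξ⟫ / H ξ) '' {ξ : EuclideanSpace ℝ (Fin N) | ξ ≠ 0})

/-- `H` is a norm on `ℝ^N`: convex, positive away from `0`, absolutely homogeneous. -/
structure IsAnisoNorm {N : ℕ} (H : EuclideanSpace ℝ (Fin N) → ℝ) : Prop where
  conv : ConvexOn ℝ Set.univ H
  pos : ∀ ξ, ξ ≠ 0 → 0 < H ξ
  hom : ∀ (t : ℝ) (ξ : EuclideanSpace ℝ (Fin N)), H (t • ξ) = |t| * H ξ

/-- `H` is `C²` away from the origin and uniformly elliptic: the Hessian of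
`ξ ↦ ½ H(ξ)²` is positive definite at every `ξ ≠ 0`. -/
def UniformlyElliptic {N : ℕ} (H : EuclideanSpace ℝ (Fin N) → ℝ) : Prop :=
  ContDiffOn ℝ 2 H {(0 : EuclideanSpace ℝ (Fin N))}ᶜ ∧
  ∀ ξ : EuclideanSpace ℝ (Fin N), ξ ≠ 0 → ∀ v : EuclideanSpace ℝ (Fin N), v ≠ 0 →
    0 < ⟪fderiv ℝ (gradient (fun z => H z ^ 2 / 2)) ξ v, v⟫

/-- The anisotropic vector field `H(∇u)^{p-1} ∇H(∇u)`, understood to be `0`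
at points where `∇u = 0`. -/
def aField {N : ℕ} (H : EuclideanSpace ℝ (Fin N) → ℝ) (p : ℝ)
    (u : EuclideanSpace ℝ (Fin N) → ℝ) (x : EuclideanSpace ℝ (Fin N)) :
    EuclideanSpace ℝ (Fin N) :=
  if gradient u x = 0 then 0 else H (gradient u x) ^ (p - 1) • gradient H (gradient u x)

/-- Weighted anisotropic perimeter of `E` relative to `S`:
`sup { ∫_E div σ : σ ∈ C¹_c(S; ℝ^N), ρ(σ(x)) ≤ w(x) for all x }`, valued in `[0,∞]`. -/
def periW {N : ℕ} (ρ w : EuclideanSpace ℝ (Fin N) → ℝ)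
    (E S : Set (EuclideanSpace ℝ (Fin N))) : ℝ≥0∞ :=
  ⨆ σ ∈ {σ : EuclideanSpace ℝ (Fin N) → EuclideanSpace ℝ (Fin N) |
      ContDiff ℝ 1 σ ∧ HasCompactSupport σ ∧ tsupport σ ⊆ S ∧ ∀ x, ρ (σ x) ≤ w x},
    ENNReal.ofReal (∫ x in E, vdiv σ x)

/-- Open convex cone with vertex at the origin (the case `S = ℝ^N` is allowed). -/
def IsOpenConvexCone {N : ℕ} (S : Set (EuclideanSpace ℝ (Fin N))) : Prop :=
  IsOpen S ∧ Convex ℝ S ∧ ∀ x ∈ S, ∀ t : ℝ, 0 < t → t • x ∈ S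

/-- The lineality space of `S`: directions along which `S` is translation invariant.
For a convex cone `Σ = ℝ^k × Σ̃` with `Σ̃` containing no lines this is `ℝ^k × {0}`. -/
def lineality {N : ℕ} (S : Set (EuclideanSpace ℝ (Fin N))) :
    Set (EuclideanSpace ℝ (Fin N)) :=
  {v | ∀ x ∈ S, ∀ t : ℝ, x + t • v ∈ S}

open Filter in
private lemma tendsto_measure_Iic_right (ρ : Measure ℝ) [IsFiniteMeasure ρ] (x : ℝ) :
    Tendsto (fun t => ρ (Iic t)) (𝓝[>] x) (𝓝 (ρ (Iic x))) := by
  have hmono : Monotone fun t => ρ (Iic t) := fun a b hab => measure_mono (Iic_subset_Iic.2 hab)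
  have h := hmono.tendsto_nhdsGT x
  have hx0 : Tendsto (fun n : ℕ => x + 1 / (n + 1)) atTop (𝓝 x) := by
    simpa using (tendsto_const_nhds (x := x)).add tendsto_one_div_add_atTop_nhds_zero_nat
  have hseq : Tendsto (fun n : ℕ => x + 1 / (n + 1)) atTop (𝓝[>] x) := by
    apply tendsto_nhdsWithin_of_tendsto_nhds_of_eventually_within _ hx0
    refine Eventually.of_forall fun n => ?_
    have h1 : (0:ℝ) < 1 / ((n:ℝ) + 1) := by positivity
    simpa using lt_add_of_pos_right x h1
  have h2 : Tendsto (fun n : ℕ => ρ (Iic (x + 1 / (n + 1)))) atTop (𝓝 (ρ (Iic x))) := by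
    have hInt : ⋂ n : ℕ, Iic (x + 1 / ((n:ℝ) + 1)) = Iic x := by
      ext y
      simp only [mem_iInter, mem_Iic]
      constructor
      · intro hy
        exact ge_of_tendsto' hx0 hy
      · intro hy n
        have h1 : (0:ℝ) ≤ 1 / ((n:ℝ) + 1) := by positivity
        linarith
    have hanti : Antitone fun n : ℕ => Iic (x + 1 / ((n:ℝ) + 1)) := by
      intro a b hab
      refine Iic_subset_Iic.2 (add_le_add_right ?_ x)
      have : ((a:ℝ) + 1) ≤ ((b:ℝ) + 1) := by exact_mod_cast add_le_add_left (Nat.cast_le.2 hab) 1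
      exact one_div_le_one_div_of_le (by positivity) this
    have := tendsto_measure_iInter_atTop (μ := ρ)
      (s := fun n : ℕ => Iic (x + 1 / ((n:ℝ) + 1)))
      (fun _ => measurableSet_Iic.nullMeasurableSet) hanti ⟨0, measure_ne_top _ _⟩
    rw [hInt] at this
    exact this
  rwa [tendsto_nhds_unique (h.comp hseq) h2] at h

open Filter in
private def cdfS (ρ : Measure ℝ) [IsFiniteMeasure ρ] : StieltjesFunction ℝ where
  toFun t := (ρ (Iic t)).toReal
  mono' a b hab := ENNReal.toReal_mono (measure_ne_top _ _) (measure_mono (Iic_subset_Iic.2 hab))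
  right_continuous' x := by
    rw [← continuousWithinAt_Ioi_iff_Ici]
    exact (ENNReal.tendsto_toReal (measure_ne_top ρ _)).comp (tendsto_measure_Iic_right ρ x)

private lemma cdfS_measure (ρ : Measure ℝ) [IsFiniteMeasure ρ] : (cdfS ρ).measure = ρ := by
  refine Measure.ext_of_Ioc _ _ fun a b hab => ?_
  rw [StieltjesFunction.measure_Ioc]
  show ENNReal.ofReal ((ρ (Iic b)).toReal - (ρ (Iic a)).toReal) = _
  rw [← ENNReal.toReal_sub_of_le (measure_mono (Iic_subset_Iic.2 hab.le)) (measure_ne_top _ _),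
    ENNReal.ofReal_toReal (by exact ENNReal.sub_ne_top (measure_ne_top _ _)),
    ← Iic_sdiff_Iic,
    measure_diff (Iic_subset_Iic.2 hab.le) measurableSet_Iic.nullMeasurableSet
      (measure_ne_top _ _)]

private lemma ae_hasDerivAt_measure_Iic (ρ : Measure ℝ) [IsFiniteMeasure ρ] :
    ∀ᵐ x, HasDerivAt (fun t => (ρ (Iic t)).toReal) ((ρ.rnDeriv volume x).toReal) x := by
  have h := (cdfS ρ).ae_hasDerivAt
  rw [cdfS_measure] at h
  exact h

private lemma ae_hasDerivAt_measure_Ioi (ρ : Measure ℝ) [IsFiniteMeasure ρ] :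
    ∀ᵐ x, HasDerivAt (fun t => (ρ (Ioi t)).toReal) (-(ρ.rnDeriv volume x).toReal) x := by
  have hrep : (fun t => (ρ (Ioi t)).toReal)
      = fun t => (ρ univ).toReal - (ρ (Iic t)).toReal := by
    funext t
    rw [← Set.compl_Iic, measure_compl measurableSet_Iic (measure_ne_top _ _),
      ENNReal.toReal_sub_of_le (measure_mono (subset_univ _)) (measure_ne_top _ _)]
  filter_upwards [ae_hasDerivAt_measure_Iic ρ] with x hx
  rw [hrep]
  exact ((hasDerivAt_const x (ρ univ).toReal).sub hx).congr_deriv (by simp)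

/-- properties of the distribution-type functions `I`, `μ` and
`K = I^α μ^β` (items (i) of Lemma 3.3 of the paper).  The bounded smooth domain `Ω`
is encoded through a smooth defining function `gΩ`. -/
theorem distribution_functions_derivative_formula
    {N : ℕ}
    (S : Set (EuclideanSpace ℝ (Fin N))) (hS : IsOpenConvexCone S)
    (Ω : Set (EuclideanSpace ℝ (Fin N)))
    (gΩ : EuclideanSpace ℝ (Fin N) → ℝ) (hgΩ : ContDiff ℝ (⊤ : ℕ∞) gΩ)
    (hΩdef : Ω = {x | gΩ x < 0}) (hΩc : IsConnected Ω) (hΩb : Bornology.IsBounded Ω)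
    (hΩreg : ∀ x ∈ frontier Ω, gradient gΩ x ≠ 0)
    (w : EuclideanSpace ℝ (Fin N) → ℝ)
    (hwc : ContinuousOn w (closure S))
    (hwpos : ∀ x ∈ S, 0 < w x)
    (hwlip : ∀ x ∈ S, ∃ K : ℝ≥0, ∃ ε > 0, LipschitzOnWith K w (Metric.ball x ε ∩ S))
    (f : ℝ → ℝ) (hfm : Measurable f) (hf0 : ∀ s, 0 ≤ s → 0 ≤ f s)
    (hfb : ∀ b : ℝ, 0 ≤ b → ∃ C, ∀ s ∈ Icc (0:ℝ) b, f s ≤ C)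
    (u : EuclideanSpace ℝ (Fin N) → ℝ)
    (hunn : ∀ x ∈ S ∩ Ω, 0 ≤ u x)
    (hulip : ∃ L : ℝ≥0, LipschitzOnWith L u (S ∩ Ω))
    (hu1 : ContDiffOn ℝ 1 u (S ∩ Ω))
    (hu0 : ∀ x ∈ S ∩ frontier Ω, u x = 0)
    (M : ℝ) (hM : M = sSup (u '' (S ∩ Ω)))
    (I μf : ℝ → ℝ)
    (hI : I = fun t => ∫ x in {x | x ∈ S ∩ Ω ∧ t < u x}, f (u x) * w x)
    (hμ : μf = fun t => ∫ x in {x | x ∈ S ∩ Ω ∧ t < u x}, w x) :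
    AntitoneOn I (Ioo 0 M) ∧ AntitoneOn μf (Ioo 0 M) ∧
    ∀ᵐ t ∂(volume.restrict (Ioo (0:ℝ) M)),
      DifferentiableAt ℝ I t ∧ DifferentiableAt ℝ μf t ∧
      deriv I t = f t * deriv μf t ∧
      ∀ α β : ℝ, 0 < I t →
        DifferentiableAt ℝ (fun s => I s ^ α * μf s ^ β) t ∧
        -(deriv (fun s => I s ^ α * μf s ^ β) t) =
          (α * I t ^ (α - 1) * μf t ^ β * f t + β * I t ^ α * μf t ^ (β - 1)) *
            (-(deriv μf t)) := by

  clear hM hΩc hΩreg hu0 hwlip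
  rcases Set.eq_empty_or_nonempty (S ∩ Ω) with hA | hA
  · -- degenerate case: the domain is empty, all integrals vanish
    have hset : ∀ t : ℝ, {x | x ∈ S ∩ Ω ∧ t < u x} = (∅ : Set (EuclideanSpace ℝ (Fin N))) := by
      intro t
      rw [eq_empty_iff_forall_notMem]
      rintro x ⟨hx, -⟩
      rw [hA] at hx
      exact hx
    have hI0 : I = fun _ => (0:ℝ) := by
      rw [hI]; funext t; rw [hset t]; simp
    have hμ0 : μf = fun _ => (0:ℝ) := by
      rw [hμ]; funext t; rw [hset t]; simp
    refine ⟨by rw [hI0]; exact fun a _ b _ _ => le_rfl,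
      by rw [hμ0]; exact fun a _ b _ _ => le_rfl, ?_⟩
    refine Filter.Eventually.of_forall fun t => ?_
    rw [hI0, hμ0]
    exact ⟨differentiableAt_const _, differentiableAt_const _, by simp,
      fun α β h0 => absurd h0 (lt_irrefl _)⟩
  · have hSopen : IsOpen S := hS.1
    have hΩopen : IsOpen Ω := by
      rw [hΩdef]; exact isOpen_lt hgΩ.continuous continuous_const
    set A := S ∩ Ω with hAdef
    have hAopen : IsOpen A := hSopen.inter hΩopen
    have hAmeas : MeasurableSet A := hAopen.measurableSet
    have hAbdd : Bornology.IsBounded A := hΩb.subset inter_subset_right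
    have hucA : ContinuousOn u A := hu1.continuousOn
    have hwA : ContinuousOn w A := hwc.mono fun x hx => subset_closure hx.1
    have hum : AEMeasurable u (volume.restrict A) := hucA.aemeasurable hAmeas
    have hwm : AEMeasurable w (volume.restrict A) := hwA.aemeasurable hAmeas
    set u₀ := hum.mk u with hu₀def
    have hu₀meas : Measurable u₀ := hum.measurable_mk
    have huu₀ : ∀ᵐ x ∂(volume.restrict A), u x = u₀ x := hum.ae_eq_mk
    set w₀ := hwm.mk w with hw₀def
    have hw₀meas : Measurable w₀ := hwm.measurable_mk
    have hww₀ : ∀ᵐ x ∂(volume.restrict A), w x = w₀ x := hwm.ae_eq_mk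
    set g : EuclideanSpace ℝ (Fin N) → ℝ≥0∞ := fun x => ENNReal.ofReal (w₀ x) with hgdef
    have hgmeas : Measurable g := ENNReal.measurable_ofReal.comp hw₀meas
    set m : Measure (EuclideanSpace ℝ (Fin N)) := (volume.restrict A).withDensity g with hmdef
    have hmac : m ≪ volume.restrict A := withDensity_absolutelyContinuous _ _
    -- `m` is a finite measure
    haveI hmfin : IsFiniteMeasure m := by
      obtain ⟨W, hW⟩ := hAbdd.isCompact_closure.exists_bound_of_continuousOn
        (hwc.mono (closure_mono fun x hx => hx.1))
      constructor
      rw [hmdef, withDensity_apply _ MeasurableSet.univ, Measure.restrict_univ]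
      calc ∫⁻ x, g x ∂(volume.restrict A)
          ≤ ∫⁻ _, ENNReal.ofReal W ∂(volume.restrict A) := by
            refine lintegral_mono_ae ?_
            filter_upwards [ae_restrict_mem hAmeas, hww₀] with x hx hx2
            exact ENNReal.ofReal_le_ofReal
              (hx2 ▸ le_trans (le_abs_self _) (hW x (subset_closure hx)))
        _ = ENNReal.ofReal W * volume A := by
            rw [lintegral_const, Measure.restrict_apply MeasurableSet.univ, univ_inter]
        _ < ∞ := ENNReal.mul_lt_top ENNReal.ofReal_lt_top hAbdd.measure_lt_top
    set ρ : Measure ℝ := m.map u₀ with hρdef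
    haveI hρfin : IsFiniteMeasure ρ := by
      constructor
      rw [hρdef, Measure.map_apply hu₀meas MeasurableSet.univ, preimage_univ]
      exact measure_lt_top m univ
    -- a bound `B` for `u` on `A`
    obtain ⟨a, ha⟩ := hA
    obtain ⟨L, hL⟩ := hulip
    obtain ⟨r, hr⟩ := hAbdd.subset_closedBall a
    have hr0 : 0 ≤ r := by
      have := hr ha; rwa [Metric.mem_closedBall, dist_self] at this
    set B : ℝ := u a + L * r with hBdef
    have hB0 : 0 ≤ B := add_nonneg (hunn a ha) (mul_nonneg L.2 hr0)
    have hub : ∀ x ∈ A, u x ∈ Icc (0:ℝ) B := by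
      intro x hx
      refine ⟨hunn x hx, ?_⟩
      have h1 : dist (u x) (u a) ≤ L * dist x a := hL.dist_le_mul x hx a ha
      have h2 : dist x a ≤ r := hr hx
      have h3 : u x - u a ≤ L * r :=
        le_trans (le_trans (le_abs_self _) h1) (mul_le_mul_of_nonneg_left h2 L.2)
      rw [hBdef]; linarith
    obtain ⟨C, hC⟩ := hfb B hB0
    -- a.e. facts with respect to `m`
    have hm1 : ∀ᵐ x ∂m, x ∈ A := hmac.ae_le (ae_restrict_mem hAmeas)
    have hm2 : ∀ᵐ x ∂m, u x = u₀ x := hmac.ae_le huu₀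
    have hu₀B : ∀ᵐ x ∂m, u₀ x ∈ Icc (0:ℝ) B := by
      filter_upwards [hm1, hm2] with x hx h2
      exact h2 ▸ hub x hx
    set fE : ℝ → ℝ≥0∞ := fun s => ENNReal.ofReal (f s) with hfEdef
    have hfEmeas : Measurable fE := ENNReal.measurable_ofReal.comp hfm
    set ν : Measure ℝ := ρ.withDensity fE with hνdef
    haveI hνfin : IsFiniteMeasure ν := by
      constructor
      rw [hνdef, withDensity_apply _ MeasurableSet.univ, Measure.restrict_univ, hρdef,
        lintegral_map hfEmeas hu₀meas]
      calc ∫⁻ x, fE (u₀ x) ∂m ≤ ∫⁻ _, ENNReal.ofReal C ∂m := by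
            refine lintegral_mono_ae ?_
            filter_upwards [hu₀B] with x hx
            exact ENNReal.ofReal_le_ofReal (hC _ hx)
        _ < ∞ := by
            rw [lintegral_const]
            exact ENNReal.mul_lt_top ENNReal.ofReal_lt_top (measure_lt_top m univ)
    -- the two level sets
    set E₀ : ℝ → Set (EuclideanSpace ℝ (Fin N)) := fun t => u₀ ⁻¹' (Ioi t) ∩ A with hE₀def
    have hE₀meas : ∀ t, MeasurableSet (E₀ t) :=
      fun t => (hu₀meas measurableSet_Ioi).inter hAmeas
    set E' : ℝ → Set (EuclideanSpace ℝ (Fin N)) := fun t => {x | x ∈ A ∧ t < u x} with hE'def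
    have hE'open : ∀ t, IsOpen (E' t) := by
      intro t
      have : E' t = A ∩ u ⁻¹' (Ioi t) := by
        ext x; exact ⟨fun h => ⟨h.1, h.2⟩, fun h => ⟨h.1, h.2⟩⟩
      rw [this]
      exact hucA.isOpen_inter_preimage hAopen isOpen_Ioi
    have hae_u : ∀ᵐ x ∂volume, x ∈ A → u x = u₀ x := (ae_restrict_iff' hAmeas).1 huu₀
    have hae_w : ∀ᵐ x ∂volume, x ∈ A → w x = w₀ x := (ae_restrict_iff' hAmeas).1 hww₀
    have hEE : ∀ t, E' t =ᵐ[volume] E₀ t := by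
      intro t
      rw [Filter.eventuallyEq_set]
      filter_upwards [hae_u] with x hx
      constructor
      · rintro ⟨hxA, hxu⟩
        exact ⟨by rw [mem_preimage, mem_Ioi, ← hx hxA]; exact hxu, hxA⟩
      · rintro ⟨hxu, hxA⟩
        exact ⟨hxA, by rw [hx hxA]; exact hxu⟩
    have hρIoi : ∀ t, ρ (Ioi t) = ∫⁻ x in E₀ t, g x ∂volume := by
      intro t
      rw [hρdef, Measure.map_apply hu₀meas measurableSet_Ioi, hmdef,
        withDensity_apply _ (hu₀meas measurableSet_Ioi),
        Measure.restrict_restrict (hu₀meas measurableSet_Ioi)]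
    -- representation of μf
    have hμrep : ∀ t, μf t = (ρ (Ioi t)).toReal := by
      intro t
      rw [hμ]
      show ∫ x in E' t, w x = _
      rw [setIntegral_congr_ae (hE'open t).measurableSet
          (by filter_upwards [hae_w] with x hx hx2; exact hx hx2.1 :
            ∀ᵐ x ∂volume, x ∈ E' t → w x = w₀ x),
        setIntegral_congr_set (hEE t), hρIoi t,
        integral_eq_lintegral_of_nonneg_ae ?_ hw₀meas.aestronglyMeasurable]
      refine (ae_restrict_iff' (hE₀meas t)).2 ?_
      filter_upwards [hae_w] with x hx hx2
      rw [← hx hx2.2]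
      exact (hwpos x hx2.2.1).le
    -- representation of I
    have hνIoi : ∀ t, ν (Ioi t) = ∫⁻ x in E₀ t, g x * fE (u₀ x) ∂volume := by
      intro t
      have hh1 : ν (Ioi t) = ∫⁻ x, fE (u₀ x) ∂(m.restrict (u₀ ⁻¹' Ioi t)) := by
        rw [hνdef, withDensity_apply _ measurableSet_Ioi, hρdef,
          Measure.restrict_map hu₀meas measurableSet_Ioi, lintegral_map hfEmeas hu₀meas]
      have hh2 : m.restrict (u₀ ⁻¹' Ioi t) = (volume.restrict (E₀ t)).withDensity g := by
        rw [hmdef, restrict_withDensity (hu₀meas measurableSet_Ioi),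
          Measure.restrict_restrict (hu₀meas measurableSet_Ioi)]
      rw [hh1, hh2]
      exact lintegral_withDensity_eq_lintegral_mul _ hgmeas (hfEmeas.comp hu₀meas)
    have hIrep : ∀ t, I t = (ν (Ioi t)).toReal := by
      intro t
      rw [hI]
      show ∫ x in E' t, f (u x) * w x = _
      have hcong : ∀ᵐ x ∂volume, x ∈ E' t → f (u x) * w x = f (u₀ x) * w₀ x := by
        filter_upwards [hae_w, hae_u] with x hxw hxu hx2
        rw [hxw hx2.1, hxu hx2.1]
      have hnn : ∀ᵐ x ∂(volume.restrict (E₀ t)), 0 ≤ f (u₀ x) * w₀ x := by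
        refine (ae_restrict_iff' (hE₀meas t)).2 ?_
        filter_upwards [hae_w, hae_u] with x hxw hxu hx2
        have hu0x : 0 ≤ u₀ x := (hxu hx2.2) ▸ hunn x hx2.2
        have hw0x : 0 ≤ w₀ x := (hxw hx2.2) ▸ (hwpos x hx2.2.1).le
        exact mul_nonneg (hf0 _ hu0x) hw0x
      have hkey : ∫ x in E₀ t, f (u₀ x) * w₀ x ∂volume
          = (∫⁻ x in E₀ t, ENNReal.ofReal (f (u₀ x) * w₀ x) ∂volume).toReal :=
        integral_eq_lintegral_of_nonneg_ae hnn
          ((hfm.comp hu₀meas).mul hw₀meas).aestronglyMeasurable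
      have hlcong : ∫⁻ x in E₀ t, ENNReal.ofReal (f (u₀ x) * w₀ x) ∂volume
          = ∫⁻ x in E₀ t, g x * fE (u₀ x) ∂volume := by
        refine lintegral_congr_ae ((ae_restrict_iff' (hE₀meas t)).2 ?_)
        filter_upwards [hae_w, hae_u] with x hxw hxu hx2
        have hu0x : 0 ≤ u₀ x := (hxu hx2.2) ▸ hunn x hx2.2
        have hf0x : 0 ≤ f (u₀ x) := hf0 _ hu0x
        rw [ENNReal.ofReal_mul hf0x, mul_comm]
      rw [setIntegral_congr_ae (hE'open t).measurableSet hcong,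
        setIntegral_congr_set (hEE t), hkey, hlcong, hνIoi t]
    -- derivative a.e. statements
    have hμfun : μf = fun t => (ρ (Ioi t)).toReal := funext hμrep
    have hIfun : I = fun t => (ν (Ioi t)).toReal := funext hIrep
    have h1 : ∀ᵐ x ∂volume, HasDerivAt μf (-(ρ.rnDeriv volume x).toReal) x := by
      filter_upwards [ae_hasDerivAt_measure_Ioi ρ] with x hx
      rw [hμfun]; exact hx
    have h2 : ∀ᵐ x ∂volume, HasDerivAt I (-(ν.rnDeriv volume x).toReal) x := by
      filter_upwards [ae_hasDerivAt_measure_Ioi ν] with x hx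
      rw [hIfun]; exact hx
    -- relation between the Radon-Nikodym derivatives
    have hsing : (ρ.singularPart volume).withDensity fE ⟂ₘ volume :=
      (Measure.mutuallySingular_singularPart ρ volume).mono_ac
        (withDensity_absolutelyContinuous _ _) Measure.AbsolutelyContinuous.rfl
    have hdec : ν = volume.withDensity (ρ.rnDeriv volume * fE)
        + (ρ.singularPart volume).withDensity fE := by
      rw [hνdef]
      conv_lhs => rw [ρ.haveLebesgueDecomposition_add volume]
      rw [withDensity_add_measure, withDensity_mul _ (Measure.measurable_rnDeriv _ _) hfEmeas,
        add_comm]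
    haveI : IsFiniteMeasure (volume.withDensity (ρ.rnDeriv volume * fE)) := by
      refine isFiniteMeasure_of_le ν ?_
      rw [hdec]; exact Measure.le_add_right le_rfl
    haveI : IsFiniteMeasure ((ρ.singularPart volume).withDensity fE) := by
      refine isFiniteMeasure_of_le ν ?_
      rw [hdec]; exact Measure.le_add_left le_rfl
    have hrn : ν.rnDeriv volume =ᵐ[volume] ρ.rnDeriv volume * fE := by
      have h3 : ν.rnDeriv volume
          =ᵐ[volume] (volume.withDensity (ρ.rnDeriv volume * fE)).rnDeriv volume := by
        rw [hdec]
        exact Measure.rnDeriv_add_of_mutuallySingular _ _ _ hsing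
      exact h3.trans (Measure.rnDeriv_withDensity volume
        ((Measure.measurable_rnDeriv _ _).mul hfEmeas))
    refine ⟨?_, ?_, ?_⟩
    · intro s hs t ht hst
      rw [hIrep s, hIrep t]
      exact ENNReal.toReal_mono (measure_ne_top _ _) (measure_mono (Ioi_subset_Ioi hst))
    · intro s hs t ht hst
      rw [hμrep s, hμrep t]
      exact ENNReal.toReal_mono (measure_ne_top _ _) (measure_mono (Ioi_subset_Ioi hst))
    · filter_upwards [ae_restrict_of_ae h1, ae_restrict_of_ae h2, ae_restrict_of_ae hrn,
        ae_restrict_of_ae (Measure.rnDeriv_lt_top ρ volume),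
        ae_restrict_mem measurableSet_Ioo] with t hμt hIt hrnt hlt hmem
      have hft0 : 0 ≤ f t := hf0 t hmem.1.le
      rw [hrnt] at hIt
      have heq : ((ρ.rnDeriv volume * fE) t).toReal = (ρ.rnDeriv volume t).toReal * f t := by
        show ((ρ.rnDeriv volume t) * fE t).toReal = _
        rw [ENNReal.toReal_mul, hfEdef]
        simp [ENNReal.toReal_ofReal hft0]
      rw [heq] at hIt
      refine ⟨hIt.differentiableAt, hμt.differentiableAt, ?_, ?_⟩
      · rw [hIt.deriv, hμt.deriv]; ring
      · intro α β hpos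
        have hμpos : 0 < μf t := by
          rcases eq_or_ne (ρ (Ioi t)) 0 with h0 | h0
          · exfalso
            rw [hIrep t, hνdef, withDensity_apply _ measurableSet_Ioi,
              Measure.restrict_eq_zero.mpr h0, lintegral_zero_measure] at hpos
            simp at hpos
          · rw [hμrep t]
            exact ENNReal.toReal_pos h0 (measure_ne_top _ _)
        have hd1 : HasDerivAt (fun s => I s ^ α)
            (-((ρ.rnDeriv volume t).toReal * f t) * α * I t ^ (α - 1)) t :=
          hIt.rpow_const (Or.inl hpos.ne')
        have hd2 : HasDerivAt (fun s => μf s ^ β)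
            (-(ρ.rnDeriv volume t).toReal * β * μf t ^ (β - 1)) t :=
          hμt.rpow_const (Or.inl hμpos.ne')
        have hK : HasDerivAt (fun s => I s ^ α * μf s ^ β) _ t := hd1.mul hd2
        refine ⟨hK.differentiableAt, ?_⟩
        rw [hK.deriv, hμt.deriv]
        ring
end
end

section
/- Let N ≥ 2, 1 < p < ∞, Σ ⊆ ℝ^N an open convex cone with vertex at 0, Ω = B_R(0) a Wulff ball centered at 0, Γ₀ := Σ ∩ ∂Ω, Γ₁ := ∂Σ ∩ Ω. Let w : closure(Σ) → [0,∞) be continuous, positively homogeneous of degree λ ≥ 0, locally Lipschitz in Σ, with w^{1/λ} concave in Σ when λ > 0; set D := N + λ. Let f : [0,∞) → ℝ be nonnegative, measurable and bounded on compact sets. Let u be nonnegative, Lipschitz on Σ∩Ω, continuously differentiable on (Σ∩Ω) ∪ Γ₀ ∪ (Γ₁∖{0}), with u = 0 on Γ₀, and a weak solution of the mixed problem: ∫_{Σ∩Ω} w H(∇u)^{p−1} ⟨∇H(∇u), ∇φ⟩ dx = ∫_{Σ∩Ω} f(u) φ w dx for every φ ∈ C_c^∞(ℝ^N) vanishing in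 a neighborhood of the closure of Γ₀. Assume either (a) p ≥ D, or (b) p < D and there exists a nonincreasing φ₀ : [0,∞) → [0,∞) with φ₀ ≤ f ≤ (Dp/(D−p))·φ₀ pointwise on [0,∞). Set M := sup_{Σ∩Ω} u, I(t) := ∫_{{u>t}} f(u) w dx, μ(t) := ∫_{{u>t}} w dx, α := p/(p−1), β := (p−D)/(D(p−1)). Then the function K(t) := I(t)^α μ(t)^β is nonincreasing on (0,M). -/
open MeasureTheory Set Metric
open scoped ENNReal NNReal RealInnerProductSpace Topology Classical

noncomputable section

/- ### Auxiliary lemmas for the proof -/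

/-- The core arithmetic inequality behind the monotonicity of `K` in the case `p < D`. -/
lemma K_key_ineq (p D : ℝ) (hp : 1 < p) (hD : 0 < D) (hpD : p < D)
    (a A m Mm φ : ℝ) (ha : 0 ≤ a) (hm : 0 ≤ m) (hφ : 0 ≤ φ) (haA : a ≤ A) (hmM : m ≤ Mm)
    (h1 : a ≤ (D * p / (D - p)) * φ * m) (h2 : a + φ * (Mm - m) ≤ A) :
    a ^ (p / (p - 1)) * m ^ ((p - D) / (D * (p - 1))) ≤
      A ^ (p / (p - 1)) * Mm ^ ((p - D) / (D * (p - 1))) := by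
  have hp1 : 0 < p - 1 := by linarith
  set α : ℝ := p / (p - 1) with hαdef
  set β : ℝ := (p - D) / (D * (p - 1)) with hβdef
  have hα : 0 < α := div_pos (by linarith) hp1
  have hβ : β < 0 := div_neg_of_neg_of_pos (by linarith) (by positivity)
  have hA0 : 0 ≤ A := ha.trans haA
  have hM0 : 0 ≤ Mm := hm.trans hmM
  rcases eq_or_lt_of_le ha with hrfl | ha'
  · rw [← hrfl, Real.zero_rpow hα.ne', zero_mul]
    exact mul_nonneg (Real.rpow_nonneg hA0 _) (Real.rpow_nonneg hM0 _)
  have hDp : 0 < D - p := by linarith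
  have hm' : 0 < m := by
    rcases eq_or_lt_of_le hm with h | h
    · exfalso; rw [← h, mul_zero] at h1; linarith
    · exact h
  have hMm' : 0 < Mm := lt_of_lt_of_le hm' hmM
  have hA' : 0 < A := lt_of_lt_of_le ha' haA
  have hφ' : 0 < φ := by
    rcases eq_or_lt_of_le hφ with h | h
    · exfalso; rw [← h, mul_zero, zero_mul] at h1; linarith
    · exact h
  set θ : ℝ := (D - p) / (D * p) with hθdef
  have hθ0 : 0 < θ := div_pos hDp (by positivity)
  have hθ1 : θ ≤ 1 := by
    rw [div_le_one (by positivity)]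
    nlinarith
  set x : ℝ := Mm / m with hxdef
  have hx1 : 1 ≤ x := (one_le_div hm').mpr hmM
  have hbern : x ^ θ ≤ 1 + θ * (x - 1) := by
    have := rpow_one_add_le_one_add_mul_self (s := x - 1) (by linarith) hθ0.le hθ1
    simpa using this
  have hstep1 : a * x ^ θ ≤ A := by
    have key : a * θ * (x - 1) ≤ φ * (Mm - m) := by
      have hCθ : (D * p / (D - p)) * θ = 1 := by
        field_simp [hθdef]
        rw [hθdef]
        have hDp0 : D * p ≠ 0 := by positivity
        field_simp
      have haθ : a * θ ≤ φ * m := by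
        calc a * θ ≤ ((D * p / (D - p)) * φ * m) * θ :=
              mul_le_mul_of_nonneg_right h1 hθ0.le
          _ = φ * m * ((D * p / (D - p)) * θ) := by ring
          _ = φ * m := by rw [hCθ, mul_one]
      have hxm : m * (x - 1) = Mm - m := by
        field_simp [hxdef]
        rw [hxdef]
        have hm0 : m ≠ 0 := hm'.ne'
        field_simp
      calc a * θ * (x - 1) ≤ φ * m * (x - 1) :=
            mul_le_mul_of_nonneg_right haθ (by linarith)
        _ = φ * (m * (x - 1)) := by ring
        _ = φ * (Mm - m) := by rw [hxm]
    calc a * x ^ θ ≤ a * (1 + θ * (x - 1)) :=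
          mul_le_mul_of_nonneg_left hbern ha
      _ = a + a * θ * (x - 1) := by ring
      _ ≤ a + φ * (Mm - m) := by linarith
      _ ≤ A := h2
  have hθα : θ * α = -β := by
    rw [hθdef, hαdef, hβdef]
    field_simp
    ring
  have hstep2 : a ^ α * x ^ (-β) ≤ A ^ α := by
    have h := Real.rpow_le_rpow (by positivity) hstep1 hα.le
    rw [Real.mul_rpow ha (Real.rpow_nonneg (by positivity) _)] at h
    rw [← Real.rpow_mul (by positivity : (0:ℝ) ≤ x) θ α, hθα] at h
    exact h
  have hmβ : m ^ β = x ^ (-β) * Mm ^ β := by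
    have h1' : (0:ℝ) < m ^ β := Real.rpow_pos_of_pos hm' β
    have h2' : (0:ℝ) < Mm ^ β := Real.rpow_pos_of_pos hMm' β
    rw [hxdef, Real.div_rpow hM0 hm, Real.rpow_neg hM0, Real.rpow_neg hm]
    field_simp
  calc a ^ α * m ^ β = (a ^ α * x ^ (-β)) * Mm ^ β := by rw [hmβ]; ring
    _ ≤ A ^ α * Mm ^ β :=
      mul_le_mul_of_nonneg_right hstep2 (Real.rpow_nonneg hM0 _)

/-- An anisotropic norm is comparable to the Euclidean norm. -/
lemma aniso_bounds {N : ℕ} (hN : 2 ≤ N) (H : EuclideanSpace ℝ (Fin N) → ℝ)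
    (hH : IsAnisoNorm H) (hcont : ContinuousOn H {(0 : EuclideanSpace ℝ (Fin N))}ᶜ) :
    ∃ c C : ℝ, 0 < c ∧ 0 < C ∧ ∀ ξ, c * ‖ξ‖ ≤ H ξ ∧ H ξ ≤ C * ‖ξ‖ := by
  have hsub : Metric.sphere (0 : EuclideanSpace ℝ (Fin N)) 1 ⊆
      {(0 : EuclideanSpace ℝ (Fin N))}ᶜ := by
    intro z hz h0
    rw [Set.mem_singleton_iff] at h0
    rw [mem_sphere_zero_iff_norm, h0] at hz
    simp at hz
  haveI : Nontrivial (EuclideanSpace ℝ (Fin N)) := by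
    refine nontrivial_of_ne (EuclideanSpace.single (⟨0, by omega⟩ : Fin N) (1:ℝ)) 0 ?_
    intro h
    have h1 : EuclideanSpace.single (⟨0, by omega⟩ : Fin N) (1:ℝ) (⟨0, by omega⟩ : Fin N) = 0 := by
      rw [h]; rfl
    rw [EuclideanSpace.single_apply] at h1
    simp at h1
  have hne : (Metric.sphere (0 : EuclideanSpace ℝ (Fin N)) 1).Nonempty :=
    NormedSpace.sphere_nonempty.mpr zero_le_one
  obtain ⟨z₁, hz₁, hmin⟩ := (isCompact_sphere (0 : EuclideanSpace ℝ (Fin N)) 1).exists_isMinOn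
    hne (hcont.mono hsub)
  obtain ⟨z₂, hz₂, hmax⟩ := (isCompact_sphere (0 : EuclideanSpace ℝ (Fin N)) 1).exists_isMaxOn
    hne (hcont.mono hsub)
  have hz₁0 : z₁ ≠ 0 := fun h => by
    rw [h, mem_sphere_zero_iff_norm] at hz₁; simp at hz₁
  refine ⟨H z₁, H z₂, hH.pos _ hz₁0, ?_, ?_⟩
  · have hz₂0 : z₂ ≠ 0 := fun h => by
      rw [h, mem_sphere_zero_iff_norm] at hz₂; simp at hz₂
    exact hH.pos _ hz₂0
  · intro ξ
    rcases eq_or_ne ξ 0 with rfl | hξ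
    · have h0 : H 0 = 0 := by
        have := hH.hom 0 0
        simpa using this
      simp [h0]
    · have hnorm : (0:ℝ) < ‖ξ‖ := norm_pos_iff.mpr hξ
      have hunit : ‖ξ‖⁻¹ • ξ ∈ Metric.sphere (0 : EuclideanSpace ℝ (Fin N)) 1 := by
        rw [mem_sphere_zero_iff_norm, norm_smul, norm_inv, norm_norm]
        field_simp
      have hξeq : H ξ = ‖ξ‖ * H (‖ξ‖⁻¹ • ξ) := by
        have hrepr : ξ = ‖ξ‖ • (‖ξ‖⁻¹ • ξ) := by
          rw [smul_smul, mul_inv_cancel₀ hnorm.ne', one_smul]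
        calc H ξ = H (‖ξ‖ • (‖ξ‖⁻¹ • ξ)) := by rw [← hrepr]
          _ = |‖ξ‖| * H (‖ξ‖⁻¹ • ξ) := hH.hom _ _
          _ = ‖ξ‖ * H (‖ξ‖⁻¹ • ξ) := by rw [abs_of_pos hnorm]
      constructor
      · rw [hξeq, mul_comm (H z₁) ‖ξ‖]
        exact mul_le_mul_of_nonneg_left (hmin hunit) hnorm.le
      · rw [hξeq, mul_comm (H z₂) ‖ξ‖]
        exact mul_le_mul_of_nonneg_left (hmax hunit) hnorm.le

/-- The dual norm is continuous and dominates (a multiple of) the Euclidean norm. -/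
lemma dualNorm_facts {N : ℕ} (hN : 2 ≤ N) (H : EuclideanSpace ℝ (Fin N) → ℝ)
    (hH : IsAnisoNorm H) (hcont : ContinuousOn H {(0 : EuclideanSpace ℝ (Fin N))}ᶜ) :
    Continuous (dualNorm H) ∧ ∃ ρ : ℝ, 0 < ρ ∧ ∀ x, x ≠ 0 → ‖x‖ ≤ ρ * dualNorm H x := by
  obtain ⟨c, C, hc, hC, hbnd⟩ := aniso_bounds hN H hH hcont
  have hξ₀ : ∃ ξ : EuclideanSpace ℝ (Fin N), ξ ≠ 0 := by
    refine ⟨EuclideanSpace.single (⟨0, by omega⟩ : Fin N) (1:ℝ), ?_⟩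
    intro h
    have h1 : EuclideanSpace.single (⟨0, by omega⟩ : Fin N) (1:ℝ) (⟨0, by omega⟩ : Fin N) = 0 := by
      rw [h]; rfl
    rw [EuclideanSpace.single_apply] at h1
    simp at h1
  have hub : ∀ y : EuclideanSpace ℝ (Fin N), ∀ ξ : EuclideanSpace ℝ (Fin N), ξ ≠ 0 →
      ⟪y, ξ⟫ / H ξ ≤ ‖y‖ / c := by
    intro y ξ hξ
    have hHξ : 0 < H ξ := hH.pos ξ hξ
    have hnξ : 0 < ‖ξ‖ := norm_pos_iff.mpr hξ
    rw [div_le_div_iff₀ hHξ (by positivity)]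
    calc ⟪y, ξ⟫ * c ≤ ‖y‖ * ‖ξ‖ * c := by nlinarith [real_inner_le_norm y ξ]
      _ = ‖y‖ * (c * ‖ξ‖) := by ring
      _ ≤ ‖y‖ * H ξ :=
          mul_le_mul_of_nonneg_left (hbnd ξ).1 (norm_nonneg y)
  have hbdd : ∀ y : EuclideanSpace ℝ (Fin N),
      BddAbove ((fun ξ => ⟪y, ξ⟫ / H ξ) '' {ξ : EuclideanSpace ℝ (Fin N) | ξ ≠ 0}) := by
    intro y
    refine ⟨‖y‖ / c, ?_⟩
    rintro v ⟨ξ, hξ, rfl⟩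
    exact hub y ξ hξ
  have hnonemp : ∀ y : EuclideanSpace ℝ (Fin N),
      ((fun ξ => ⟪y, ξ⟫ / H ξ) '' {ξ : EuclideanSpace ℝ (Fin N) | ξ ≠ 0}).Nonempty := by
    intro y
    obtain ⟨ξ, hξ⟩ := hξ₀
    exact ⟨_, ⟨ξ, hξ, rfl⟩⟩
  have honeside : ∀ x y : EuclideanSpace ℝ (Fin N),
      dualNorm H x ≤ dualNorm H y + ‖x - y‖ / c := by
    intro x y
    apply csSup_le (hnonemp x)
    rintro v ⟨ξ, hξ, rfl⟩
    have hHξ : 0 < H ξ := hH.pos ξ hξ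
    show ⟪x, ξ⟫ / H ξ ≤ dualNorm H y + ‖x - y‖ / c
    have hsplit : ⟪x, ξ⟫ / H ξ = ⟪y, ξ⟫ / H ξ + ⟪x - y, ξ⟫ / H ξ := by
      rw [← add_div, ← inner_add_left]
      congr 2
      abel
    rw [hsplit]
    have h1 : ⟪y, ξ⟫ / H ξ ≤ dualNorm H y := le_csSup (hbdd y) ⟨ξ, hξ, rfl⟩
    have h2 : ⟪x - y, ξ⟫ / H ξ ≤ ‖x - y‖ / c := hub (x - y) ξ hξ
    linarith
  have hlip : LipschitzWith (⟨1/c, by positivity⟩ : ℝ≥0) (dualNorm H) := by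
    apply LipschitzWith.of_dist_le_mul
    intro x y
    rw [Real.dist_eq, abs_sub_le_iff]
    constructor
    · have hd : dist x y = ‖x - y‖ := dist_eq_norm x y
      rw [hd]
      have heq : ‖x - y‖ / c = (1/c) * ‖x - y‖ := by ring
      push_cast
      change _ ≤ 1 / c * ‖x - y‖
      linarith [honeside x y, heq]
    · have hd : dist x y = ‖x - y‖ := dist_eq_norm x y
      have hd' : ‖y - x‖ = ‖x - y‖ := norm_sub_rev y x
      push_cast
      rw [hd]
      have h2 : ‖y - x‖ / c = (1/c) * ‖x - y‖ := by rw [hd']; ring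
      change _ ≤ 1 / c * ‖x - y‖
      linarith [honeside y x]
  refine ⟨hlip.continuous, C, hC, ?_⟩
  intro x hx
  have hnx : 0 < ‖x‖ := norm_pos_iff.mpr hx
  have hmem : ⟪x, x⟫ / H x ∈ (fun ξ => ⟪x, ξ⟫ / H ξ) '' {ξ : EuclideanSpace ℝ (Fin N) | ξ ≠ 0} :=
    ⟨x, hx, rfl⟩
  have hle : ⟪x, x⟫ / H x ≤ dualNorm H x := le_csSup (hbdd x) hmem
  have hinner : ⟪x, x⟫ = ‖x‖ ^ 2 := real_inner_self_eq_norm_sq x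
  have hHx : 0 < H x := hH.pos x hx
  have h2 : ‖x‖ / C ≤ ⟪x, x⟫ / H x := by
    rw [hinner, div_le_div_iff₀ hC hHx]
    calc ‖x‖ * H x ≤ ‖x‖ * (C * ‖x‖) := mul_le_mul_of_nonneg_left (hbnd x).2 (norm_nonneg x)
      _ = ‖x‖ ^ 2 * C := by ring
  have h3 : ‖x‖ / C ≤ dualNorm H x := h2.trans hle
  calc ‖x‖ = C * (‖x‖ / C) := by field_simp
    _ ≤ C * dualNorm H x := mul_le_mul_of_nonneg_left h3 hC.le


/-- the function `K = I^α μ^β`, with `α = p/(p-1)` and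
`β = (p-D)/(D(p-1))`, is nonincreasing on `(0, M)` (item (iv) of Lemma 3.3). -/
theorem K_function_nonincreasing
    {N : ℕ} (hN : 2 ≤ N) (p : ℝ) (hp : 1 < p)
    (H : EuclideanSpace ℝ (Fin N) → ℝ)
    (hH : IsAnisoNorm H) (hHell : UniformlyElliptic H)
    (S : Set (EuclideanSpace ℝ (Fin N))) (hS : IsOpenConvexCone S)
    (R : ℝ) (hR : 0 < R)
    (Ω : Set (EuclideanSpace ℝ (Fin N))) (hΩ : Ω = {x | dualNorm H x < R})
    (lam : ℝ) (hlam : 0 ≤ lam) (w : EuclideanSpace ℝ (Fin N) → ℝ)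
    (hwc : ContinuousOn w (closure S))
    (hwnn : ∀ x ∈ closure S, 0 ≤ w x)
    (hwhom : ∀ x ∈ closure S, ∀ t : ℝ, 0 < t → w (t • x) = t ^ lam * w x)
    (hwconc : 0 < lam → ConcaveOn ℝ S (fun x => w x ^ (1 / lam)))
    (hwlip : ∀ x ∈ S, ∃ K : ℝ≥0, ∃ ε > 0, LipschitzOnWith K w (Metric.ball x ε ∩ S))
    (f : ℝ → ℝ) (hfm : Measurable f) (hf0 : ∀ s, 0 ≤ s → 0 ≤ f s)
    (hfb : ∀ b : ℝ, 0 ≤ b → ∃ C, ∀ s ∈ Icc (0:ℝ) b, f s ≤ C)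
    (u : EuclideanSpace ℝ (Fin N) → ℝ)
    (hunn : ∀ x ∈ S ∩ Ω, 0 ≤ u x)
    (hulip : ∃ L : ℝ≥0, LipschitzOnWith L u (S ∩ Ω))
    (hu1 : ContDiffOn ℝ 1 u ((S ∩ Ω) ∪ (S ∩ frontier Ω) ∪ ((frontier S ∩ Ω) \ {0})))
    (hu0 : ∀ x ∈ S ∩ frontier Ω, u x = 0)
    (hweak : ∀ φ : EuclideanSpace ℝ (Fin N) → ℝ,
      ContDiff ℝ (⊤ : ℕ∞) φ → HasCompactSupport φ →
      (∃ U, IsOpen U ∧ closure (S ∩ frontier Ω) ⊆ U ∧ ∀ x ∈ U, φ x = 0) →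
      ∫ x in S ∩ Ω, w x * ⟪aField H p u x, gradient φ x⟫ =
        ∫ x in S ∩ Ω, f (u x) * φ x * w x)
    (D : ℝ) (hD : D = (N : ℝ) + lam)
    (hab : D ≤ p ∨
      (p < D ∧ ∃ φ₀ : ℝ → ℝ, AntitoneOn φ₀ (Ici 0) ∧
        (∀ s, 0 ≤ s → 0 ≤ φ₀ s) ∧ ∀ s, 0 ≤ s → φ₀ s ≤ f s ∧
          f s ≤ (D * p / (D - p)) * φ₀ s))
    (M : ℝ) (hM : M = sSup (u '' (S ∩ Ω)))
    (I μf : ℝ → ℝ)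
    (hI : I = fun t => ∫ x in {x | x ∈ S ∩ Ω ∧ t < u x}, f (u x) * w x)
    (hμ : μf = fun t => ∫ x in {x | x ∈ S ∩ Ω ∧ t < u x}, w x) :
    AntitoneOn (fun t => I t ^ (p / (p - 1)) * μf t ^ ((p - D) / (D * (p - 1))))
      (Ioo 0 M) := by
  classical
  have hp1 : (0:ℝ) < p - 1 := by linarith
  have hD2 : (2:ℝ) ≤ D := by
    rw [hD]
    have h2N : (2:ℝ) ≤ (N:ℝ) := by exact_mod_cast hN
    linarith
  have hD0 : (0:ℝ) < D := by linarith
  have hα : (0:ℝ) < p / (p - 1) := div_pos (by linarith) hp1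
  -- geometry of Ω
  have hHcont : ContinuousOn H {(0 : EuclideanSpace ℝ (Fin N))}ᶜ := hHell.1.continuousOn
  obtain ⟨hdcont, ρ, hρ, hρbnd⟩ := dualNorm_facts hN H hH hHcont
  have hΩopen : IsOpen Ω := by
    rw [hΩ]
    exact isOpen_lt hdcont continuous_const
  rw [hI, hμ]
  set T := S ∩ Ω with hTdef
  have hTopen : IsOpen T := hS.1.inter hΩopen
  have hTmeas : MeasurableSet T := hTopen.measurableSet
  have hTsub : T ⊆ Metric.closedBall 0 (ρ * R) := by
    intro x hx
    rw [mem_closedBall_zero_iff]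
    rcases eq_or_ne x 0 with rfl | hx0
    · simp
      positivity
    · have h1 : ‖x‖ ≤ ρ * dualNorm H x := hρbnd x hx0
      have h2 : dualNorm H x < R := by
        have hxΩ := hx.2
        rw [hΩ] at hxΩ
        exact hxΩ
      nlinarith
  have hTfin : volume T < ⊤ :=
    lt_of_le_of_lt (measure_mono hTsub) measure_closedBall_lt_top
  haveI : IsFiniteMeasure (volume.restrict T) :=
    ⟨by rwa [Measure.restrict_apply_univ]⟩
  obtain ⟨L, hL⟩ := hulip
  have hucont : ContinuousOn u T := hL.continuousOn
  have hEopen : ∀ r : ℝ, IsOpen {x | x ∈ T ∧ r < u x} := by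
    intro r
    have heq : {x | x ∈ T ∧ r < u x} = T ∩ u ⁻¹' (Ioi r) := rfl
    rw [heq]
    exact hucont.isOpen_inter_preimage hTopen isOpen_Ioi
  have hEmeas : ∀ r : ℝ, MeasurableSet {x | x ∈ T ∧ r < u x} :=
    fun r => (hEopen r).measurableSet
  have hEsub : ∀ r : ℝ, {x | x ∈ T ∧ r < u x} ⊆ T := fun r x hx => hx.1
  rcases Set.eq_empty_or_nonempty T with hTe | ⟨x₀, hx₀T⟩
  · -- degenerate case : the domain is empty, all integrals vanish
    intro t₁ ht₁ t₂ ht₂ hle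
    have hzero : ∀ (r : ℝ) (g : EuclideanSpace ℝ (Fin N) → ℝ),
        (∫ x in {x | x ∈ T ∧ r < u x}, g x) = 0 := by
      intro r g
      have hempty : {x | x ∈ T ∧ r < u x} = (∅ : Set (EuclideanSpace ℝ (Fin N))) := by
        rw [hTe]
        ext x
        simp
      rw [hempty, Measure.restrict_empty, integral_zero_measure]
    simp only [hzero]
    exact le_rfl
  -- nondegenerate case
  have hnormT : ∀ x ∈ T, ‖x‖ ≤ ρ * R := fun x hx => mem_closedBall_zero_iff.mp (hTsub hx)
  have hubnd : ∀ x ∈ T, u x ≤ u x₀ + (L:ℝ) * (2 * (ρ * R)) := by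
    intro x hx
    have hd : dist (u x) (u x₀) ≤ (L:ℝ) * dist x x₀ := hL.dist_le_mul x hx x₀ hx₀T
    have h1 : u x - u x₀ ≤ (L:ℝ) * dist x x₀ := by
      rw [Real.dist_eq] at hd
      calc u x - u x₀ ≤ |u x - u x₀| := le_abs_self _
        _ ≤ (L:ℝ) * dist x x₀ := hd
    have h2 : dist x x₀ ≤ ‖x‖ + ‖x₀‖ := by
      rw [dist_eq_norm]
      exact norm_sub_le x x₀
    have h3 : (L:ℝ) * dist x x₀ ≤ (L:ℝ) * (2 * (ρ * R)) := by
      apply mul_le_mul_of_nonneg_left _ L.coe_nonneg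
      have h4 := hnormT x hx
      have h5 := hnormT x₀ hx₀T
      linarith
    linarith
  set B := max (u x₀ + (L:ℝ) * (2 * (ρ * R))) 0 with hBdef
  have hB0 : 0 ≤ B := le_max_right _ _
  have huB : ∀ x ∈ T, u x ∈ Icc (0:ℝ) B := fun x hx =>
    ⟨hunn x hx, (hubnd x hx).trans (le_max_left _ _)⟩
  obtain ⟨Cf, hCf⟩ := hfb B hB0
  have hfnn : ∀ x ∈ T, 0 ≤ f (u x) := fun x hx => hf0 _ (hunn x hx)
  have hfle : ∀ x ∈ T, f (u x) ≤ Cf := fun x hx => hCf _ (huB x hx)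
  have hCf0 : 0 ≤ Cf := le_trans (hfnn x₀ hx₀T) (hfle x₀ hx₀T)
  -- bounds on w
  have hTbdd : Bornology.IsBounded T := Metric.isBounded_closedBall.subset hTsub
  have hclT : IsCompact (closure T) := hTbdd.isCompact_closure
  have hTsubS : T ⊆ closure S := fun x hx => subset_closure hx.1
  have hclTS : closure T ⊆ closure S := closure_minimal hTsubS isClosed_closure
  obtain ⟨Cw, hCw⟩ := hclT.exists_bound_of_continuousOn (hwc.mono hclTS)
  have hw0 : ∀ x ∈ T, 0 ≤ w x := fun x hx => hwnn x (hTsubS hx)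
  have hwle : ∀ x ∈ T, w x ≤ Cw := fun x hx =>
    (le_abs_self _).trans (hCw x (subset_closure hx))
  have hCw0 : 0 ≤ Cw := (norm_nonneg (w x₀)).trans (hCw x₀ (subset_closure hx₀T))
  -- measurability and integrability
  have huae : AEMeasurable u (volume.restrict T) := hucont.aemeasurable hTmeas
  have hwae : AEMeasurable w (volume.restrict T) := (hwc.mono hTsubS).aemeasurable hTmeas
  have hgae : AEMeasurable (fun x => f (u x) * w x) (volume.restrict T) :=
    (hfm.comp_aemeasurable huae).mul hwae
  have hwint : IntegrableOn w T volume := by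
    refine Integrable.mono' (integrable_const Cw) hwae.aestronglyMeasurable ?_
    filter_upwards [ae_restrict_mem hTmeas] with x hx
    rw [Real.norm_eq_abs, abs_of_nonneg (hw0 x hx)]
    exact hwle x hx
  have hgint : IntegrableOn (fun x => f (u x) * w x) T volume := by
    refine Integrable.mono' (integrable_const (Cf * Cw)) hgae.aestronglyMeasurable ?_
    filter_upwards [ae_restrict_mem hTmeas] with x hx
    rw [Real.norm_eq_abs, abs_of_nonneg (mul_nonneg (hfnn x hx) (hw0 x hx))]
    exact mul_le_mul (hfle x hx) (hwle x hx) (hw0 x hx) hCf0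
  -- the monotonicity argument
  intro t₁ ht₁ t₂ ht₂ hle
  dsimp only
  set E₁ := {x | x ∈ T ∧ t₁ < u x} with hE₁def
  set E₂ := {x | x ∈ T ∧ t₂ < u x} with hE₂def
  have h21 : E₂ ⊆ E₁ := fun x hx => ⟨hx.1, lt_of_le_of_lt hle hx.2⟩
  have hE₁m : MeasurableSet E₁ := hEmeas t₁
  have hE₂m : MeasurableSet E₂ := hEmeas t₂
  have hE₁T : E₁ ⊆ T := hEsub t₁
  have hE₂T : E₂ ⊆ T := hEsub t₂
  have hgnn1 : ∀ x ∈ E₁, 0 ≤ f (u x) * w x := fun x hx =>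
    mul_nonneg (hfnn x hx.1) (hw0 x hx.1)
  have hI0₂ : 0 ≤ ∫ x in E₂, f (u x) * w x :=
    setIntegral_nonneg hE₂m fun x hx => mul_nonneg (hfnn x hx.1) (hw0 x hx.1)
  have hμ0₂ : 0 ≤ ∫ x in E₂, w x :=
    setIntegral_nonneg hE₂m fun x hx => hw0 x hx.1
  have hIle : (∫ x in E₂, f (u x) * w x) ≤ ∫ x in E₁, f (u x) * w x := by
    refine setIntegral_mono_set (hgint.mono_set hE₁T) ?_ (HasSubset.Subset.eventuallyLE h21)
    filter_upwards [ae_restrict_mem hE₁m] with x hx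
    exact hgnn1 x hx
  have hμle : (∫ x in E₂, w x) ≤ ∫ x in E₁, w x := by
    refine setIntegral_mono_set (hwint.mono_set hE₁T) ?_ (HasSubset.Subset.eventuallyLE h21)
    filter_upwards [ae_restrict_mem hE₁m] with x hx
    exact hw0 x hx.1
  rcases hab with hDp | ⟨hpD, φ₀, hanti, hφnn, hfφ⟩
  · -- case (a) : D ≤ p, both exponents are nonnegative
    have hβ0 : 0 ≤ (p - D) / (D * (p - 1)) := div_nonneg (by linarith) (by positivity)
    have hI0₁ : 0 ≤ ∫ x in E₁, f (u x) * w x := hI0₂.trans hIle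
    exact mul_le_mul (Real.rpow_le_rpow hI0₂ hIle hα.le)
      (Real.rpow_le_rpow hμ0₂ hμle hβ0)
      (Real.rpow_nonneg hμ0₂ _) (Real.rpow_nonneg hI0₁ _)
  · -- case (b) : p < D, use the structure condition on f
    have ht₂0 : (0:ℝ) ≤ t₂ := ht₂.1.le
    have hDp' : (0:ℝ) < D - p := by linarith
    have hCc : (0:ℝ) < D * p / (D - p) := div_pos (by positivity) hDp'
    -- pointwise bound giving I(t₂) ≤ C φ₀(t₂) μ(t₂)
    have h1 : (∫ x in E₂, f (u x) * w x) ≤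
        (D * p / (D - p)) * φ₀ t₂ * ∫ x in E₂, w x := by
      calc (∫ x in E₂, f (u x) * w x)
          ≤ ∫ x in E₂, (D * p / (D - p)) * φ₀ t₂ * w x := by
            refine setIntegral_mono_on (hgint.mono_set hE₂T)
              (((hwint.mono_set hE₂T)).const_mul _) hE₂m ?_
            intro x hx
            have hxT : x ∈ T := hx.1
            have hu0x : 0 ≤ u x := hunn x hxT
            have htu : t₂ ≤ u x := hx.2.le
            have h4 := (hfφ (u x) hu0x).2
            have h5 : φ₀ (u x) ≤ φ₀ t₂ :=
              hanti (mem_Ici.mpr ht₂0) (mem_Ici.mpr (ht₂0.trans htu)) htu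
            have h6 : f (u x) ≤ D * p / (D - p) * φ₀ t₂ :=
              h4.trans (mul_le_mul_of_nonneg_left h5 hCc.le)
            exact mul_le_mul_of_nonneg_right h6 (hw0 x hxT)
        _ = (D * p / (D - p)) * φ₀ t₂ * ∫ x in E₂, w x := by
            rw [MeasureTheory.integral_const_mul]
    -- the layer-cake lower bound : I(t₁) ≥ I(t₂) + φ₀(t₂) (μ(t₁) − μ(t₂))
    have hdm : MeasurableSet (E₁ \ E₂) := hE₁m.diff hE₂m
    have hunion : E₂ ∪ (E₁ \ E₂) = E₁ := union_diff_cancel h21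
    have hdsub : E₁ \ E₂ ⊆ T := (diff_subset).trans hE₁T
    have hIsplit : (∫ x in E₁, f (u x) * w x) =
        (∫ x in E₂, f (u x) * w x) + ∫ x in E₁ \ E₂, f (u x) * w x := by
      have h := setIntegral_union disjoint_sdiff_self_right hdm
        (hgint.mono_set hE₂T) (hgint.mono_set hdsub)
      rw [hunion] at h
      exact h
    have hμsplit : (∫ x in E₁, w x) =
        (∫ x in E₂, w x) + ∫ x in E₁ \ E₂, w x := by
      have h := setIntegral_union disjoint_sdiff_self_right hdm
        (hwint.mono_set hE₂T) (hwint.mono_set hdsub)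
      rw [hunion] at h
      exact h
    have hdiff : φ₀ t₂ * ((∫ x in E₁, w x) - ∫ x in E₂, w x) ≤
        ∫ x in E₁ \ E₂, f (u x) * w x := by
      have hstep : (∫ x in E₁ \ E₂, φ₀ t₂ * w x) ≤ ∫ x in E₁ \ E₂, f (u x) * w x := by
        refine setIntegral_mono_on ((hwint.mono_set hdsub).const_mul _)
          (hgint.mono_set hdsub) hdm ?_
        intro x hx
        have hxT : x ∈ T := hx.1.1
        have hu0x : 0 ≤ u x := hunn x hxT
        have hut : u x ≤ t₂ := by
          by_contra hcon
          exact hx.2 ⟨hxT, lt_of_not_ge hcon⟩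
        have h5 : φ₀ t₂ ≤ φ₀ (u x) :=
          hanti (mem_Ici.mpr hu0x) (mem_Ici.mpr ht₂0) hut
        have h6 : φ₀ t₂ ≤ f (u x) := h5.trans (hfφ (u x) hu0x).1
        exact mul_le_mul_of_nonneg_right h6 (hw0 x hxT)
      have hconst : (∫ x in E₁ \ E₂, φ₀ t₂ * w x) =
          φ₀ t₂ * ((∫ x in E₁, w x) - ∫ x in E₂, w x) := by
        rw [MeasureTheory.integral_const_mul]
        congr 1
        linarith [hμsplit]
      linarith
    have h2 : (∫ x in E₂, f (u x) * w x) +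
        φ₀ t₂ * ((∫ x in E₁, w x) - ∫ x in E₂, w x) ≤ ∫ x in E₁, f (u x) * w x := by
      linarith [hIsplit, hdiff]
    exact K_key_ineq p D hp hD0 hpD _ _ _ _ (φ₀ t₂) hI0₂ hμ0₂ (hφnn t₂ ht₂0)
      hIle hμle h1 h2
end
end

section
/- Let Σ ⊆ ℝ^N be an open convex cone with vertex at 0, let B = {x : H₀(x) < 1} be the unit Wulff ball of H centered at 0, and set K := Σ ∩ B. Define the anisotropic perimeter associated with the convex body K by P_K(E) := sup{ ∫_E div σ(x) dx : σ ∈ C¹_c(ℝ^N;ℝ^N), σ(x) ∈ closure(K) for all x }. Then for every Lebesgue-measurable set E ⊆ Σ with P(E;ℝ^N) < ∞ (finite Euclidean perimeter), one has P_K(E) ≤ P_H(E;Σ). -/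
open MeasureTheory Set Metric
open scoped ENNReal NNReal RealInnerProductSpace Topology Classical

noncomputable section

/-- The anisotropic perimeter associated with a convex body `K`:
`P_K(E) = sup { ∫_E div σ : σ ∈ C¹_c(ℝ^N; ℝ^N), σ(x) ∈ closure K }`. -/
def periK {N : ℕ} (K : Set (EuclideanSpace ℝ (Fin N)))
    (E : Set (EuclideanSpace ℝ (Fin N))) : ℝ≥0∞ :=
  ⨆ σ ∈ {σ : EuclideanSpace ℝ (Fin N) → EuclideanSpace ℝ (Fin N) |
      ContDiff ℝ 1 σ ∧ HasCompactSupport σ ∧ ∀ x, σ x ∈ closure K},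
    ENNReal.ofReal (∫ x in E, vdiv σ x)

/-!
Let `σ` be admissible for `P_K(E)`, so `σ` takes values in `closure Σ` and `H₀(σ) ≤ 1`.
Mollifying `x ↦ dist(x, ℝᴺ \ Σ)` and composing with a smooth step gives cutoffs `ηₙ`
with compact support in `Σ` that increase to `1` on `Σ`. Because `Σ + closure Σ ⊆ Σ`,
each `ηₙ` is nondecreasing along every direction of `closure Σ`, in particular along `σ`,
so `div (ηₙ σ) = ∇ηₙ · σ + ηₙ div σ ≥ ηₙ div σ`. The fields `ηₙ σ` are admissible for
`P_H(E; Σ)`, and dominated convergence gives `∫_E div σ ≤ P_H(E; Σ)`.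
-/

open Filter Function ContinuousLinearMap
open scoped Convolution Pointwise

section Mollification

variable {V : Type*} [NormedAddCommGroup V] [NormedSpace ℝ V] [FiniteDimensional ℝ V]

theorem LipschitzWith.exists_contDiff_dist_le_and_le_add {f : V → ℝ} (hf : LipschitzWith 1 f)
    {r : ℝ} (hr : 0 < r) :
    ∃ g : V → ℝ, ContDiff ℝ 1 g ∧ (∀ x, dist (g x) (f x) ≤ r) ∧
      ∀ y, (∀ z, f z ≤ f (z + y)) → ∀ x, g x ≤ g (x + y) := by
  borelize V
  let μ : Measure V := .addHaar
  let φ : ContDiffBump (0 : V) := ⟨r / 2, r, half_pos hr, half_lt_self hr⟩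
  have hconv : ∀ h : V → ℝ, Continuous h → ConvolutionExists (φ.normed μ) h (lsmul ℝ ℝ) μ :=
    fun h hh => φ.hasCompactSupport_normed.convolutionExists_left _ φ.continuous_normed
      hh.locallyIntegrable
  refine ⟨φ.normed μ ⋆[lsmul ℝ ℝ, μ] f, φ.hasCompactSupport_normed.contDiff_convolution_left _
    φ.contDiff_normed hf.continuous.locallyIntegrable, fun x => ?_, fun y hy x => ?_⟩
  · refine φ.dist_normed_convolution_le hf.continuous.aestronglyMeasurable fun z hz => ?_
    have hfzx := hf.dist_le_mul z x
    rw [NNReal.coe_one, one_mul] at hfzx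
    exact hfzx.trans (mem_ball.1 hz).le
  · have hshift : (φ.normed μ ⋆[lsmul ℝ ℝ, μ] f) (x + y) =
        (φ.normed μ ⋆[lsmul ℝ ℝ, μ] fun z => f (z + y)) x := by
      simp only [convolution_def, sub_add_eq_add_sub]
    rw [hshift]
    exact convolution_mono_right (hconv f hf.continuous x)
      (hconv _ (hf.continuous.comp (continuous_add_const y)) x) φ.nonneg_normed hy

theorem LipschitzWith.exists_contDiff_cutoff {f : V → ℝ} (hf : LipschitzWith 1 f)
    {r : ℝ} (hr : 0 < r) :
    ∃ η : V → ℝ, ContDiff ℝ 1 η ∧ (∀ x, η x ∈ Icc 0 1) ∧ support η ⊆ {x | r ≤ f x} ∧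
      (∀ x, 4 * r ≤ f x → η x = 1) ∧ ∀ y, (∀ z, f z ≤ f (z + y)) → ∀ x, η x ≤ η (x + y) := by
  obtain ⟨g, hgC, hgf, hg_mono⟩ := hf.exists_contDiff_dist_le_and_le_add hr
  have hgf' : ∀ x, |g x - f x| ≤ r := fun x => by simpa [Real.dist_eq] using hgf x
  -- `η x ≠ 0` forces `2 r < g x`, and `3 r ≤ g x` forces `η x = 1`.
  refine ⟨fun x => Real.smoothTransition (g x / r - 2),
    Real.smoothTransition.contDiff.comp ((hgC.div_const r).sub contDiff_const),
    fun x => ⟨Real.smoothTransition.nonneg _, Real.smoothTransition.le_one _⟩,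
    fun x hx => ?_, fun x hx => ?_, fun y hy x => ?_⟩
  · show r ≤ f x
    have : 0 < g x / r - 2 := by
      by_contra! h
      exact hx (Real.smoothTransition.zero_of_nonpos h)
    rw [lt_sub_iff_add_lt, zero_add, lt_div_iff₀ hr] at this
    linarith [(abs_le.1 (hgf' x)).2]
  · refine Real.smoothTransition.one_of_one_le ?_
    rw [le_sub_iff_add_le, le_div_iff₀ hr]
    linarith [(abs_le.1 (hgf' x)).1]
  · refine Real.smoothTransition.monotone (sub_le_sub_right ?_ _)
    exact div_le_div_of_nonneg_right (hg_mono y hy x) hr.le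

end Mollification

section Calculus

variable {V : Type*} [NormedAddCommGroup V] [NormedSpace ℝ V]

theorem fderiv_apply_nonneg_of_le_add_smul {F : V → ℝ} {x y : V} (hF : DifferentiableAt ℝ F x)
    (h : ∀ t : ℝ, 0 < t → F x ≤ F (x + t • y)) : 0 ≤ fderiv ℝ F x y :=
  IsLocalMinOn.hasFDerivWithinAt_nonneg (s := {z | F x ≤ F z})
    (eventually_nhdsWithin_of_forall fun _ hz => hz) hF.hasFDerivAt.hasFDerivWithinAt
    (mem_posTangentConeAt_of_frequently_mem
      (eventually_nhdsWithin_of_forall (s := Ioi 0) h).frequently)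

theorem tendsto_integral_mul_of_tendsto_one {α : Type*} [MeasurableSpace α] {μ : Measure α}
    {g : α → ℝ} (hg : Integrable g μ) {η : ℕ → α → ℝ}
    (hη : ∀ n, AEStronglyMeasurable (η n) μ) (hη_le : ∀ n x, |η n x| ≤ 1)
    (hlim : ∀ᵐ x ∂μ, Tendsto (fun n => η n x) atTop (𝓝 1)) :
    Tendsto (fun n => ∫ x, η n x * g x ∂μ) atTop (𝓝 (∫ x, g x ∂μ)) := by
  refine tendsto_integral_of_dominated_convergence (fun x => ‖g x‖)
    (fun n => (hη n).mul hg.aestronglyMeasurable) hg.norm (fun n => ?_) ?_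
  · refine Eventually.of_forall fun x => ?_
    rw [norm_mul, Real.norm_eq_abs (η n x)]
    exact mul_le_of_le_one_left (norm_nonneg _) (hη_le n x)
  · filter_upwards [hlim] with x hx
    simpa using hx.mul_const (g x)

end Calculus

section Cone

variable {N : ℕ} {S : Set (EuclideanSpace ℝ (Fin N))}

theorem IsOpenConvexCone.add_mem (hS : IsOpenConvexCone S) {x y : EuclideanSpace ℝ (Fin N)}
    (hx : x ∈ S) (hy : y ∈ S) : x + y ∈ S := by
  have hmid : (1 / 2 : ℝ) • x + (1 / 2 : ℝ) • y ∈ S :=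
    hS.2.1 hx hy (by norm_num) (by norm_num) (by norm_num)
  have := hS.2.2 _ hmid 2 two_pos
  rwa [smul_add, smul_smul, smul_smul, show (2 : ℝ) * (1 / 2) = 1 by norm_num, one_smul,
    one_smul] at this

theorem IsOpenConvexCone.add_mem_of_mem_closure (hS : IsOpenConvexCone S)
    {x y : EuclideanSpace ℝ (Fin N)} (hx : x ∈ closure S) (hy : y ∈ S) : x + y ∈ S := by
  have hnhds : {z | x + y - z ∈ S} ∈ 𝓝 x :=
    (hS.1.preimage (continuous_const.sub continuous_id)).mem_nhds (by simpa using hy)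
  obtain ⟨z, hz, hzS⟩ := mem_closure_iff_nhds.1 hx _ hnhds
  simpa using hS.add_mem hzS hz

theorem IsOpenConvexCone.smul_mem_closure (hS : IsOpenConvexCone S)
    {x : EuclideanSpace ℝ (Fin N)} (hx : x ∈ closure S) {t : ℝ} (ht : 0 < t) :
    t • x ∈ closure S :=
  MapsTo.closure (fun z hz => hS.2.2 z hz t ht) (continuous_const_smul t) hx

theorem IsOpenConvexCone.infDist_compl_le_add (hS : IsOpenConvexCone S)
    {y : EuclideanSpace ℝ (Fin N)} (hy : y ∈ closure S) (x : EuclideanSpace ℝ (Fin N)) :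
    infDist x Sᶜ ≤ infDist (x + y) Sᶜ := by
  rcases Sᶜ.eq_empty_or_nonempty with hempty | hne
  · simp [hempty]
  refine (le_infDist hne).2 fun z hz => ?_
  have hzy : z - y ∈ Sᶜ := fun h => hz (by simpa using hS.add_mem_of_mem_closure hy h)
  calc infDist x Sᶜ ≤ dist x (z - y) := infDist_le_dist_of_mem hzy
    _ = dist (x + y) z := by rw [dist_eq_norm, dist_eq_norm, sub_sub_eq_add_sub]

structure IsConeCutoff (S : Set (EuclideanSpace ℝ (Fin N)))
    (η : ℕ → EuclideanSpace ℝ (Fin N) → ℝ) : Prop where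
  contDiff : ∀ n, ContDiff ℝ 1 (η n)
  mem_Icc : ∀ n x, η n x ∈ Icc 0 1
  tsupport_subset : ∀ n, tsupport (η n) ⊆ S
  le_add : ∀ n x, ∀ y ∈ closure S, η n x ≤ η n (x + y)
  tendsto_one : ∀ x ∈ S, Tendsto (fun n => η n x) atTop (𝓝 1)

theorem IsOpenConvexCone.exists_isConeCutoff (hS : IsOpenConvexCone S) :
    ∃ η, IsConeCutoff S η := by
  rcases eq_or_ne S univ with rfl | hS_ne
  · exact ⟨fun _ _ => 1, fun _ => contDiff_const, fun _ _ => ⟨zero_le_one, le_rfl⟩,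
      fun _ => subset_univ _, fun _ _ _ _ => le_rfl, fun _ _ => tendsto_const_nhds⟩
  have hne : Sᶜ.Nonempty := nonempty_compl.2 hS_ne
  set f : EuclideanSpace ℝ (Fin N) → ℝ := fun x => infDist x Sᶜ
  have hpos : ∀ x, 0 < f x ↔ x ∈ S := fun x => by
    simpa using (hS.1.isClosed_compl.notMem_iff_infDist_pos hne (x := x)).symm
  choose η hηC hη01 hη_supp hη_one hη_mono using fun n : ℕ =>
    (lipschitz_infDist_pt Sᶜ).exists_contDiff_cutoff (r := 1 / (n + 1)) Nat.one_div_pos_of_nat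
  refine ⟨η, hηC, hη01, fun n => ?_, fun n x y hy => ?_, fun x hx => ?_⟩
  · refine (closure_minimal (hη_supp n) (isClosed_le continuous_const
      (continuous_infDist_pt _))).trans fun x hx => (hpos x).1 (lt_of_lt_of_le ?_ hx)
    exact Nat.one_div_pos_of_nat
  · exact hη_mono n y (hS.infDist_compl_le_add hy) x
  · have hr : Tendsto (fun n : ℕ => 4 * (1 / ((n : ℝ) + 1))) atTop (𝓝 (4 * 0)) :=
      tendsto_one_div_add_atTop_nhds_zero_nat.const_mul 4
    rw [mul_zero] at hr
    refine tendsto_const_nhds.congr' ?_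
    filter_upwards [hr.eventually_lt_const ((hpos x).2 hx)] with n hn
    exact (hη_one n x hn.le).symm

end Cone

section DualNorm

variable {N : ℕ} {H : EuclideanSpace ℝ (Fin N) → ℝ}

theorem dualNorm_smul_of_nonneg {c : ℝ} (hc : 0 ≤ c) (x : EuclideanSpace ℝ (Fin N)) :
    dualNorm H (c • x) = c * dualNorm H x := by
  have himage : (fun ξ => ⟪c • x, ξ⟫ / H ξ) '' {ξ | ξ ≠ 0} =
      c • (fun ξ => ⟪x, ξ⟫ / H ξ) '' {ξ | ξ ≠ 0} := by
    rw [← image_smul, image_image]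
    simp only [real_inner_smul_left, smul_eq_mul, mul_div_assoc]
  rw [dualNorm, himage, Real.sSup_smul_of_nonneg hc, smul_eq_mul, dualNorm]

theorem IsAnisoNorm.continuous (hH : IsAnisoNorm H) : Continuous H :=
  continuousOn_univ.1 (hH.conv.continuousOn isOpen_univ)

theorem IsAnisoNorm.exists_pos_mul_norm_le (hH : IsAnisoNorm H) :
    ∃ m > 0, ∀ ξ, m * ‖ξ‖ ≤ H ξ := by
  have hH0 : H 0 = 0 := by simpa using hH.hom 0 0
  rcases subsingleton_or_nontrivial (EuclideanSpace ℝ (Fin N)) with _ | _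
  · exact ⟨1, one_pos, fun ξ => by simp [Subsingleton.elim ξ 0, hH0]⟩
  obtain ⟨ξ₀, hξ₀, hmin⟩ := (isCompact_sphere (0 : EuclideanSpace ℝ (Fin N)) 1).exists_isMinOn
    (NormedSpace.sphere_nonempty.2 zero_le_one) hH.continuous.continuousOn
  refine ⟨H ξ₀, hH.pos ξ₀ (ne_zero_of_mem_sphere one_ne_zero ⟨ξ₀, hξ₀⟩), fun ξ => ?_⟩
  rcases eq_or_ne ξ 0 with rfl | hξ
  · simp [hH0]
  have hξpos : 0 < ‖ξ‖ := norm_pos_iff.2 hξ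
  have hξ₀_le : H ξ₀ ≤ H (‖ξ‖⁻¹ • ξ) := hmin (by simp [norm_smul, hξpos.ne'])
  rwa [hH.hom, abs_of_pos (inv_pos.2 hξpos), le_inv_mul_iff₀ hξpos, mul_comm] at hξ₀_le

theorem IsAnisoNorm.bddAbove_inner_div (hH : IsAnisoNorm H) (x : EuclideanSpace ℝ (Fin N)) :
    BddAbove ((fun ξ => ⟪x, ξ⟫ / H ξ) '' {ξ | ξ ≠ 0}) := by
  obtain ⟨m, hm, hmH⟩ := hH.exists_pos_mul_norm_le
  refine ⟨‖x‖ / m, ?_⟩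
  rintro _ ⟨ξ, hξ, rfl⟩
  have hξpos : 0 < ‖ξ‖ := norm_pos_iff.2 hξ
  rw [div_le_div_iff₀ (hH.pos ξ hξ) hm]
  calc ⟪x, ξ⟫ * m ≤ ‖x‖ * ‖ξ‖ * m := by gcongr; exact real_inner_le_norm x ξ
    _ ≤ ‖x‖ * H ξ := by rw [mul_assoc]; gcongr; linarith [hmH ξ]

theorem IsAnisoNorm.inner_div_le_dualNorm (hH : IsAnisoNorm H) (x : EuclideanSpace ℝ (Fin N))
    {ξ : EuclideanSpace ℝ (Fin N)} (hξ : ξ ≠ 0) : ⟪x, ξ⟫ / H ξ ≤ dualNorm H x :=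
  le_csSup (hH.bddAbove_inner_div x) ⟨ξ, hξ, rfl⟩

theorem IsAnisoNorm.dualNorm_le_one_of_mem_closure (hH : IsAnisoNorm H)
    {x : EuclideanSpace ℝ (Fin N)} (hx : x ∈ closure {z | dualNorm H z < 1}) :
    dualNorm H x ≤ 1 := by
  refine Real.sSup_le ?_ zero_le_one
  rintro _ ⟨ξ, hξ, rfl⟩
  have hclosed : IsClosed {z : EuclideanSpace ℝ (Fin N) | ⟪z, ξ⟫ / H ξ ≤ 1} :=
    isClosed_le ((continuous_id.inner continuous_const).div_const _) continuous_const
  refine closure_minimal (fun z hz => ?_) hclosed hx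
  exact (hH.inner_div_le_dualNorm z hξ).trans (le_of_lt hz)

theorem dualNorm_smul_le_one {c : ℝ} (hc : c ∈ Icc 0 1) {x : EuclideanSpace ℝ (Fin N)}
    (hx : dualNorm H x ≤ 1) : dualNorm H (c • x) ≤ 1 := by
  rw [dualNorm_smul_of_nonneg hc.1]
  exact (mul_le_of_le_one_right hc.1 hx).trans hc.2

end DualNorm

section Divergence

variable {N : ℕ}

theorem vdiv_smul {η : EuclideanSpace ℝ (Fin N) → ℝ}
    {σ : EuclideanSpace ℝ (Fin N) → EuclideanSpace ℝ (Fin N)} {x : EuclideanSpace ℝ (Fin N)}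
    (hη : DifferentiableAt ℝ η x) (hσ : DifferentiableAt ℝ σ x) :
    vdiv (fun y => η y • σ y) x = fderiv ℝ η x (σ x) + η x * vdiv σ x := by
  have hησ : fderiv ℝ η x (σ x) = ∑ i, fderiv ℝ η x (EuclideanSpace.single i 1) * σ x i := by
    conv_lhs => rw [← (EuclideanSpace.basisFun (Fin N) ℝ).sum_repr (σ x)]
    simp [map_sum, mul_comm]
  simp only [vdiv, fderiv_fun_smul hη hσ, add_apply, FunLike.coe_smul, Pi.smul_apply,
    smulRight_apply, PiLp.add_apply, PiLp.smul_apply, smul_eq_mul, Finset.sum_add_distrib,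
    ← Finset.mul_sum, hησ]
  ring

theorem support_vdiv_subset (σ : EuclideanSpace ℝ (Fin N) → EuclideanSpace ℝ (Fin N)) :
    support (vdiv σ) ⊆ tsupport σ := by
  intro x hx
  by_contra hxσ
  apply hx
  simp [vdiv, fderiv_of_notMem_tsupport ℝ hxσ]

theorem continuous_vdiv {σ : EuclideanSpace ℝ (Fin N) → EuclideanSpace ℝ (Fin N)}
    (hσ : ContDiff ℝ 1 σ) : Continuous (vdiv σ) := by
  have := hσ.continuous_fderiv one_ne_zero
  unfold vdiv
  fun_prop

theorem integrable_vdiv {σ : EuclideanSpace ℝ (Fin N) → EuclideanSpace ℝ (Fin N)}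
    (hσ : ContDiff ℝ 1 σ) (hσc : HasCompactSupport σ) : Integrable (vdiv σ) :=
  (continuous_vdiv hσ).integrable_of_hasCompactSupport (hσc.mono' (support_vdiv_subset σ))

theorem integral_mul_vdiv_le_integral_vdiv_smul {η : EuclideanSpace ℝ (Fin N) → ℝ}
    {σ : EuclideanSpace ℝ (Fin N) → EuclideanSpace ℝ (Fin N)} (hη : ContDiff ℝ 1 η)
    (hσ : ContDiff ℝ 1 σ) (hσc : HasCompactSupport σ) (hησ : ∀ x, 0 ≤ fderiv ℝ η x (σ x))
    (s : Set (EuclideanSpace ℝ (Fin N))) :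
    ∫ x in s, η x * vdiv σ x ≤ ∫ x in s, vdiv (fun y => η y • σ y) x := by
  have hint : Integrable (fun x => η x * vdiv σ x) :=
    (hη.continuous.mul (continuous_vdiv hσ)).integrable_of_hasCompactSupport
      (hσc.mono' (support_vdiv_subset σ)).mul_left
  have hint' : Integrable (vdiv fun y => η y • σ y) :=
    integrable_vdiv (hη.smul hσ) (hσc.smul_left (f := η))
  refine integral_mono hint.integrableOn hint'.integrableOn fun x => ?_
  rw [vdiv_smul (hη.differentiable one_ne_zero x) (hσ.differentiable one_ne_zero x)]
  linarith [hησ x]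

end Divergence

theorem periK_le_anisotropic_perimeter_general
    {N : ℕ}
    (H : EuclideanSpace ℝ (Fin N) → ℝ) (hH : IsAnisoNorm H)
    (S : Set (EuclideanSpace ℝ (Fin N))) (hS : IsOpenConvexCone S)
    (E : Set (EuclideanSpace ℝ (Fin N))) (hES : E ⊆ S) :
    periK (S ∩ {y | dualNorm H y < 1}) E ≤
      periW (dualNorm H) (fun _ => (1:ℝ)) E S := by
  refine iSup₂_le fun σ hσ => ?_
  obtain ⟨hσC, hσc, hσK⟩ := hσ
  obtain ⟨η, hη⟩ := hS.exists_isConeCutoff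
  have hσS : ∀ x, σ x ∈ closure S := fun x => closure_mono inter_subset_left (hσK x)
  have hσH : ∀ x, dualNorm H (σ x) ≤ 1 := fun x =>
    hH.dualNorm_le_one_of_mem_closure (closure_mono inter_subset_right (hσK x))
  have hadmissible : ∀ n, ENNReal.ofReal (∫ x in E, vdiv (fun y => η n y • σ y) x) ≤
      periW (dualNorm H) (fun _ => (1:ℝ)) E S := fun n =>
    le_iSup₂_of_le (fun y => η n y • σ y) ⟨(hη.contDiff n).smul hσC, hσc.smul_left (f := η n),
      (tsupport_smul_subset_left _ _).trans (hη.tsupport_subset n),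
      fun x => dualNorm_smul_le_one (hη.mem_Icc n x) (hσH x)⟩ le_rfl
  have hgrad : ∀ n x, 0 ≤ fderiv ℝ (η n) x (σ x) := fun n x =>
    fderiv_apply_nonneg_of_le_add_smul ((hη.contDiff n).differentiable one_ne_zero x)
      fun t ht => hη.le_add n x _ (hS.smul_mem_closure (hσS x) ht)
  have hlim : Tendsto (fun n => ∫ x in E, η n x * vdiv σ x) atTop (𝓝 (∫ x in E, vdiv σ x)) :=
    tendsto_integral_mul_of_tendsto_one (integrable_vdiv hσC hσc).integrableOn
      (fun n => (hη.contDiff n).continuous.aestronglyMeasurable)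
      (fun n x => abs_le.2 ⟨by linarith [(hη.mem_Icc n x).1], (hη.mem_Icc n x).2⟩)
      (ae_mono (Measure.restrict_mono hES le_rfl)
        (ae_restrict_of_forall_mem hS.1.measurableSet hη.tendsto_one))
  exact le_of_tendsto' (ENNReal.tendsto_ofReal hlim) fun n =>
    (ENNReal.ofReal_le_ofReal (integral_mul_vdiv_le_integral_vdiv_smul (hη.contDiff n) hσC hσc
      (hgrad n) E)).trans (hadmissible n)

/-- comparison between the perimeter associated with `K = Σ ∩ B`
and the anisotropic perimeter relative to the cone (formula (4.4) of the paper). -/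
theorem periK_le_anisotropic_perimeter
    {N : ℕ}
    (H : EuclideanSpace ℝ (Fin N) → ℝ) (hH : IsAnisoNorm H)
    (S : Set (EuclideanSpace ℝ (Fin N))) (hS : IsOpenConvexCone S)
    (E : Set (EuclideanSpace ℝ (Fin N))) (hE : MeasurableSet E) (hES : E ⊆ S)
    (hEfin : periW (fun x => ‖x‖) (fun _ => (1:ℝ)) E Set.univ < ⊤) :
    periK (S ∩ {y | dualNorm H y < 1}) E ≤
      periW (dualNorm H) (fun _ => (1:ℝ)) E S :=
  periK_le_anisotropic_perimeter_general H hH S hS E hES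
end
end
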